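/- Let L ≥ 0 and let f : ℝ → [0,∞] be convex, non-decreasing, lower semicontinuous, with f(0) = 0, f finite and continuous on (-∞,1], and f(p) = +∞ for p > 1. Then the map q ↦ q − (f ∨ ℓ_L)^♯(q) is non-decreasing and continuous on [0,∞) and converges to max(f(1), L) = (f ∨ ℓ_L)(1) as q → ∞. -/

import Mathlib

open scoped Classical
noncomputable section

/-- Fenchel conjugate (Legendre transform) of an extended-real-valued function:
`fconj f q = sup_{p ∈ ℝ} (p*q - f p)`. -/
def fconj (f : ℝ → EReal) (q : ℝ) : EReal := ⨆ p : ℝ, ((p * q : ℝ) : EReal) - f p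

/-- Convexity for extended-real-valued functions on `ℝ`. -/
def ConvexE (f : ℝ → EReal) : Prop :=
  ∀ x y t : ℝ, 0 ≤ t → t ≤ 1 →
    f (t * x + (1 - t) * y) ≤ (t : EReal) * f x + ((1 - t : ℝ) : EReal) * f y

/-- The payoff function `ℓ_L`: `0` for `p ≤ 0`, `L` for `0 < p ≤ 1`, `+∞` for `p > 1`. -/
def ellL (L : ℝ) (p : ℝ) : EReal :=
  if p ≤ 0 then 0 else if p ≤ 1 then (L : EReal) else ⊤

/-- Right derivative (as an extended real) of `f` at `p`, i.e. the infimum of the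
right slopes `(f (p+h) - f p)/h` over `h > 0`. -/
def rightDE (f : ℝ → EReal) (p : ℝ) : EReal :=
  ⨅ h : {h : ℝ // 0 < h}, ((h.1⁻¹ : ℝ) : EReal) * (f (p + h.1) - f p)

/-- Left derivative (as an extended real) of `f` at `p`, i.e. the supremum of the
left slopes `(f p - f (p-h))/h` over `h > 0`. -/
def leftDE (f : ℝ → EReal) (p : ℝ) : EReal :=
  ⨆ h : {h : ℝ // 0 < h}, ((h.1⁻¹ : ℝ) : EReal) * (f p - f (p - h.1))

/-- Closed convex envelope of `f`: the pointwise supremum of all lower semicontinuous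
convex minorants of `f` (the largest closed convex function majorized by `f`). -/
def coE (f : ℝ → EReal) (p : ℝ) : EReal :=
  ⨆ g : {g : ℝ → EReal // ConvexE g ∧ LowerSemicontinuous g ∧ ∀ x, g x ≤ f x}, g.1 p

/-- Subdifferential of an extended-real-valued function at a point. -/
def subdiffE (f : ℝ → EReal) (p : ℝ) : Set ℝ :=
  {q : ℝ | ∀ r : ℝ, f p + ((q * (r - p) : ℝ) : EReal) ≤ f r}

/-! Write `G = f ∨ ℓ_L` and `g = G` as a real function on `(-∞, 1]`. Since `G = ⊤` beyond `1`,
for `q ≥ 0` the conjugate is the real number `c q = sup_{p ≤ 1} (p q - g p)`. Comparing the slopes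
termwise gives `0 ≤ c b - c a ≤ b - a` for `0 ≤ a ≤ b` (using `g ≥ 0 = g 0`), so `q ↦ q - c q` is
monotone and `1`-Lipschitz. The slope `p = 1` gives `q - c q ≤ g 1`, and left-continuity of `g`
at `1` gives the limit `g 1 = max (f 1) L`. -/

open Set Filter Topology

lemma ellL_of_nonpos {L p : ℝ} (hp : p ≤ 0) : ellL L p = 0 := by
  simp [ellL, hp]

lemma ellL_of_pos_of_le_one {L p : ℝ} (hp₀ : 0 < p) (hp₁ : p ≤ 1) : ellL L p = L := by
  simp [ellL, not_le.mpr hp₀, hp₁]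

lemma ellL_one (L : ℝ) : ellL L 1 = L := ellL_of_pos_of_le_one one_pos le_rfl

lemma ellL_ne_top {L p : ℝ} (hp : p ≤ 1) : ellL L p ≠ ⊤ := by
  unfold ellL; split_ifs <;> simp

lemma continuousWithinAt_max_ellL {L : ℝ} {f : ℝ → EReal}
    (hf : ContinuousWithinAt f (Iic 1) 1) :
    ContinuousWithinAt (fun p => max (f p) (ellL L p)) (Iic 1) 1 := by
  have hev : ∀ᶠ p in 𝓝[≤] (1 : ℝ), max (f p) (ellL L p) = max (f p) L := by
    filter_upwards [inter_mem_nhdsWithin (Iic 1) (Ioi_mem_nhds one_pos)] with p hp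
    rw [ellL_of_pos_of_le_one hp.2 hp.1]
  have hmax : ContinuousWithinAt (fun p => max (f p) (L : EReal)) (Iic 1) 1 :=
    hf.max tendsto_const_nhds
  exact hmax.congr_of_eventuallyEq hev (by rw [ellL_one])

/-- For `0 ≤ q` and `g ≥ 0` on `(-∞, 1]` the set is bounded above by `q`; elsewhere this `sSup`
may be the junk value `0`. -/
def conjIic (g : ℝ → ℝ) (q : ℝ) : ℝ := sSup ((fun p => p * q - g p) '' Iic 1)

section conjIic

variable {g : ℝ → ℝ} {p q a b : ℝ}

lemma isLUB_conjIic (hg : ∀ p ≤ 1, 0 ≤ g p) (hq : 0 ≤ q) :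
    IsLUB ((fun p => p * q - g p) '' Iic 1) (conjIic g q) := by
  refine isLUB_csSup ⟨_, mem_image_of_mem _ (self_mem_Iic (a := (1 : ℝ)))⟩ ⟨q, ?_⟩
  rintro _ ⟨p, hp, rfl⟩
  nlinarith [hg p hp, mem_Iic.1 hp]

lemma le_conjIic (hg : ∀ p ≤ 1, 0 ≤ g p) (hq : 0 ≤ q) (hp : p ≤ 1) :
    p * q - g p ≤ conjIic g q :=
  (isLUB_conjIic hg hq).1 ⟨p, hp, rfl⟩

lemma conjIic_le {r : ℝ} (h : ∀ p ≤ 1, p * q - g p ≤ r) : conjIic g q ≤ r :=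
  csSup_le ⟨_, mem_image_of_mem _ (self_mem_Iic (a := (1 : ℝ)))⟩ <| by
    rintro _ ⟨p, hp, rfl⟩
    exact h p hp

lemma conjIic_le_add_sub (hg : ∀ p ≤ 1, 0 ≤ g p) (ha : 0 ≤ a) (hab : a ≤ b) :
    conjIic g b ≤ conjIic g a + (b - a) :=
  conjIic_le fun p hp => by
    nlinarith [le_conjIic hg ha hp, mul_le_of_le_one_left (sub_nonneg.2 hab) hp]

lemma conjIic_mono (hg : ∀ p ≤ 1, 0 ≤ g p) (hg₀ : g 0 = 0) (ha : 0 ≤ a) (hab : a ≤ b) :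
    conjIic g a ≤ conjIic g b := by
  have hb := ha.trans hab
  refine conjIic_le fun p hp => ?_
  rcases le_total 0 p with hp₀ | hp₀
  · nlinarith [le_conjIic hg hb hp]
  · nlinarith [le_conjIic hg hb zero_le_one, hg p hp]

lemma monotoneOn_sub_conjIic (hg : ∀ p ≤ 1, 0 ≤ g p) :
    MonotoneOn (fun q => q - conjIic g q) (Ici 0) := fun a ha _ _ hab => by
  linarith [conjIic_le_add_sub hg (mem_Ici.1 ha) hab]

lemma lipschitzOnWith_sub_conjIic (hg : ∀ p ≤ 1, 0 ≤ g p) (hg₀ : g 0 = 0) :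
    LipschitzOnWith 1 (fun q => q - conjIic g q) (Ici 0) := by
  refine LipschitzOnWith.of_le_add fun x hx y hy => ?_
  rw [Real.dist_eq]
  rcases le_total x y with hxy | hxy
  · linarith [monotoneOn_sub_conjIic hg hx hy hxy, abs_nonneg (x - y)]
  · linarith [conjIic_mono hg hg₀ hy hxy, le_abs_self (x - y)]

lemma sub_conjIic_le (hg : ∀ p ≤ 1, 0 ≤ g p) (hq : 0 ≤ q) : q - conjIic g q ≤ g 1 := by
  linarith [le_conjIic hg hq le_rfl]

/-- For `p` near `1` the slope `p * q - g p` is at most `q - g 1 + ε` by continuity; for `p`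
away from `1` it is at most `q - δ q`, which is below `q - g 1` once `q` is large. -/
lemma tendsto_sub_conjIic (hg : ∀ p ≤ 1, 0 ≤ g p) (hcont : ContinuousWithinAt g (Iic 1) 1) :
    Tendsto (fun q => q - conjIic g q) atTop (𝓝 (g 1)) := by
  rw [Metric.tendsto_atTop]
  intro ε hε
  obtain ⟨δ, hδ, hnear⟩ := Metric.continuousWithinAt_iff.1 hcont (ε / 2) (half_pos hε)
  refine ⟨max 0 (g 1 / δ), fun q hq => ?_⟩
  have hq₀ : 0 ≤ q := (le_max_left _ _).trans hq
  have hqδ : g 1 ≤ δ * q := by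
    have := (le_max_right _ _).trans hq
    rwa [div_le_iff₀ hδ, mul_comm] at this
  have hconj : conjIic g q ≤ q - g 1 + ε / 2 := by
    refine conjIic_le fun p hp => ?_
    by_cases hpδ : 1 - δ < p
    · have hdist : dist p 1 < δ := by
        rw [Real.dist_eq, abs_sub_comm, abs_of_nonneg (by linarith)]
        linarith
      have hgp := (abs_lt.1 (Real.dist_eq (g p) (g 1) ▸ hnear hp hdist)).1
      linarith [mul_le_of_le_one_left hq₀ hp]
    · linarith [hg p hp, mul_le_mul_of_nonneg_right (not_lt.1 hpδ) hq₀]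
  rw [Real.dist_eq, abs_lt]
  constructor <;> linarith [sub_conjIic_le hg hq₀]

end conjIic

section fconj

variable {G : ℝ → EReal} {g : ℝ → ℝ}

lemma fconj_le_coe (hG : ∀ p ≤ 1, G p = g p) (htop : ∀ p, 1 < p → G p = ⊤) {q r : ℝ}
    (h : ∀ p ≤ 1, p * q - g p ≤ r) : fconj G q ≤ r := by
  refine iSup_le fun p => ?_
  rcases le_or_gt p 1 with hp | hp
  · rw [hG p hp, ← EReal.coe_sub]
    exact EReal.coe_le_coe_iff.2 (h p hp)
  · rw [htop p hp, EReal.sub_top]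
    exact bot_le

lemma fconj_eq_coe_conjIic (hG : ∀ p ≤ 1, G p = g p) (htop : ∀ p, 1 < p → G p = ⊤)
    (hg : ∀ p ≤ 1, 0 ≤ g p) {q : ℝ} (hq : 0 ≤ q) : fconj G q = conjIic g q := by
  refine le_antisymm (fconj_le_coe hG htop fun p hp => le_conjIic hg hq hp) ?_
  have hlub := isLUB_conjIic hg hq
  rw [conjIic, EReal.coe_strictMono.monotone.map_csSup_of_continuousAt
    continuous_coe_real_ereal.continuousAt hlub.nonempty ⟨_, hlub.1⟩]
  refine sSup_le ?_
  rintro _ ⟨_, ⟨p, hp, rfl⟩, rfl⟩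
  have := le_iSup (fun p : ℝ => ((p * q : ℝ) : EReal) - G p) p
  rwa [hG p hp, ← EReal.coe_sub] at this

end fconj

theorem slope_map_monotone_continuous_tendsto_general
    (L : ℝ) (f : ℝ → EReal)
    (hpos : ∀ p, 0 ≤ f p) (hf0 : f 0 = 0)
    (hfin : ∀ p : ℝ, p ≤ 1 → f p ≠ ⊤) (hcont : ContinuousOn f (Set.Iic 1))
    (htop : ∀ p : ℝ, 1 < p → f p = ⊤) :
    MonotoneOn (fun q : ℝ => (q : EReal) - fconj (fun p => max (f p) (ellL L p)) q)
      (Set.Ici (0 : ℝ)) ∧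
    ContinuousOn (fun q : ℝ => (q : EReal) - fconj (fun p => max (f p) (ellL L p)) q)
      (Set.Ici (0 : ℝ)) ∧
    max (f 1) (ellL L 1) = max (f 1) (L : EReal) ∧
    Filter.Tendsto (fun q : ℝ => (q : EReal) - fconj (fun p => max (f p) (ellL L p)) q)
      Filter.atTop (nhds (max (f 1) (L : EReal))) := by
  set G : ℝ → EReal := fun p => max (f p) (ellL L p)
  set g : ℝ → ℝ := fun p => (G p).toReal
  have hGpos : ∀ p, 0 ≤ G p := fun p => (hpos p).trans (le_max_left _ _)
  have hGfin : ∀ p ≤ 1, G p ≠ ⊤ := fun p hp => max_ne_top (hfin p hp) (ellL_ne_top hp)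
  have hG : ∀ p ≤ 1, G p = g p := fun p hp =>
    (EReal.coe_toReal (hGfin p hp) (EReal.bot_lt_zero.trans_le (hGpos p)).ne').symm
  have hGtop : ∀ p, 1 < p → G p = ⊤ := fun p hp => by simp [G, htop p hp]
  have hg : ∀ p ≤ 1, 0 ≤ g p := fun p _ => EReal.toReal_nonneg (hGpos p)
  have hg₀ : g 0 = 0 := by simp [g, G, hf0, ellL_of_nonpos le_rfl]
  have hgcont : ContinuousWithinAt g (Iic 1) 1 :=
    (EReal.tendsto_toReal (hGfin 1 le_rfl) (EReal.bot_lt_zero.trans_le (hGpos 1)).ne').comp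
      (continuousWithinAt_max_ellL (hcont 1 self_mem_Iic))
  have heq : EqOn (fun q : ℝ => (q : EReal) - fconj G q)
      (fun q => ((q - conjIic g q : ℝ) : EReal)) (Ici 0) := fun q hq => by
    simp only [fconj_eq_coe_conjIic hG hGtop hg hq, EReal.coe_sub]
  have hG1 : max (f 1) (L : EReal) = g 1 := by rw [← hG 1 le_rfl, ← ellL_one L]
  refine ⟨?_, ?_, by rw [ellL_one], ?_⟩
  · exact (EReal.coe_strictMono.monotone.comp_monotoneOn
      (monotoneOn_sub_conjIic hg)).congr heq.symm
  · exact (continuous_coe_real_ereal.comp_continuousOn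
      (lipschitzOnWith_sub_conjIic hg hg₀).continuousOn).congr heq
  · rw [hG1]
    exact (EReal.tendsto_coe.2 (tendsto_sub_conjIic hg hgcont)).congr'
      (eventuallyEq_of_mem (Ici_mem_atTop 0) heq).symm

/-- **Deterministic core of Lemma 3.4**: the map `q ↦ q - (f ∨ ℓ_L)^♯(q)` is
non-decreasing and continuous on `[0,∞)` and converges to
`max (f 1) L = (f ∨ ℓ_L)(1)` as `q → ∞`. -/
theorem slope_map_monotone_continuous_tendsto
    (L : ℝ) (hL : 0 ≤ L) (f : ℝ → EReal)
    (hpos : ∀ p, 0 ≤ f p) (hconv : ConvexE f) (hmono : Monotone f)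
    (hlsc : LowerSemicontinuous f) (hf0 : f 0 = 0)
    (hfin : ∀ p : ℝ, p ≤ 1 → f p ≠ ⊤) (hcont : ContinuousOn f (Set.Iic 1))
    (htop : ∀ p : ℝ, 1 < p → f p = ⊤) :
    MonotoneOn (fun q : ℝ => (q : EReal) - fconj (fun p => max (f p) (ellL L p)) q)
      (Set.Ici (0 : ℝ)) ∧
    ContinuousOn (fun q : ℝ => (q : EReal) - fconj (fun p => max (f p) (ellL L p)) q)
      (Set.Ici (0 : ℝ)) ∧
    max (f 1) (ellL L 1) = max (f 1) (L : EReal) ∧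
    Filter.Tendsto (fun q : ℝ => (q : EReal) - fconj (fun p => max (f p) (ellL L p)) q)
      Filter.atTop (nhds (max (f 1) (L : EReal))) :=
  slope_map_monotone_continuous_tendsto_general L f hpos hf0 hfin hcont htop
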